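/- If A and B are TFSs with A ⊑ B via morphism h, Π(A) = Π(B), every type inequality θ(q) ⊑ θ(h(q)) is an equality, and every reentrancy of B is a reentrancy of A, then B ⊑ A (so A and B are alphabetic variants). -/
import Mathlib


/-! Typed feature structures (TFSs), following Carpenter 1992.
`pathδ` extends the partial transition function `δ` to paths (lists of features). -/

variable {Nodes Feats Types : Type}

def pathδ (δ : Nodes → Feats → Option Nodes) : Nodes → List Feats → Option Nodes
  | q, [] => some q
  | q, f :: π => (δ q f).bind fun q' => pathδ δ q' π

/-- A typed feature structure: a finite set of nodes `Q`, a root, and a partial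
transition function `δ : Q × Feats ⇀ Q` (modelled as `none` outside its domain,
undefined outside `Q`), with every node reachable from the root. -/
structure TFS (Nodes Feats : Type) where
  Q : Finset Nodes
  root : Nodes
  root_mem : root ∈ Q
  δ : Nodes → Feats → Option Nodes
  dom : ∀ q f, (δ q f).isSome → q ∈ Q
  closed : ∀ q f q', δ q f = some q' → q' ∈ Q
  reach : ∀ q ∈ Q, ∃ π : List Feats, pathδ δ root π = some q

/-- The set of paths defined from the root of `A`. -/
def TFS.Pi (A : TFS Nodes Feats) : Set (List Feats) :=
  {π | (pathδ A.δ A.root π).isSome}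

/-- `A` is cyclic if some node returns to itself along a nonempty path. -/
def TFS.Cyclic (A : TFS Nodes Feats) : Prop :=
  ∃ q ∈ A.Q, ∃ α : List Feats, α ≠ [] ∧ pathδ A.δ q α = some q

def TFS.Acyclic (A : TFS Nodes Feats) : Prop := ¬ A.Cyclic

/-- A subsumption morphism from `A` to `B` w.r.t. the typing function `θ`:
maps root to root, maps `Q_A` into `Q_B`, is monotone on node types,
and commutes with the transition function. -/
def IsMorphism [PartialOrder Types] (θ : Nodes → Types)
    (A B : TFS Nodes Feats) (h : Nodes → Nodes) : Prop :=
  h A.root = B.root ∧ (∀ q ∈ A.Q, h q ∈ B.Q) ∧ (∀ q ∈ A.Q, θ q ≤ θ (h q)) ∧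
  ∀ q f q', A.δ q f = some q' → B.δ (h q) f = some (h q')

/-- `A` subsumes `B` iff some subsumption morphism from `A` to `B` exists. -/
def Subsumes [PartialOrder Types] (θ : Nodes → Types) (A B : TFS Nodes Feats) : Prop :=
  ∃ h, IsMorphism θ A B h

/-- Strict subsumption: `A ⊏ B` iff `A ⊑ B` and not `B ⊑ A`. -/
def StrictlySubsumes [PartialOrder Types] (θ : Nodes → Types) (A B : TFS Nodes Feats) : Prop :=
  Subsumes θ A B ∧ ¬ Subsumes θ B A

lemma pathδ_append (δ : Nodes → Feats → Option Nodes) (q : Nodes) (π₁ π₂ : List Feats) :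
    pathδ δ q (π₁ ++ π₂) = (pathδ δ q π₁).bind fun q' => pathδ δ q' π₂ := by
  induction π₁ generalizing q with
  | nil => simp [pathδ]
  | cons f π ih =>
    simp only [List.cons_append, pathδ]
    cases δ q f with
    | none => rfl
    | some q' => simp [ih]

lemma path_mem (A : TFS Nodes Feats) {q p : Nodes} {π : List Feats} (hq : q ∈ A.Q)
    (hp : pathδ A.δ q π = some p) : p ∈ A.Q := by
  induction π generalizing q with
  | nil => simp [pathδ] at hp; exact hp ▸ hq
  | cons f π ih =>
    simp only [pathδ] at hp
    cases hδ : A.δ q f with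
    | none => simp [hδ] at hp
    | some q' => rw [hδ] at hp; exact ih (A.closed q f q' hδ) hp

lemma morphism_path [PartialOrder Types] {θ : Nodes → Types} {A B : TFS Nodes Feats}
    {h : Nodes → Nodes} (hm : IsMorphism θ A B h) {q p : Nodes} {π : List Feats}
    (hp : pathδ A.δ q π = some p) : pathδ B.δ (h q) π = some (h p) := by
  induction π generalizing q with
  | nil => simp [pathδ] at hp ⊢; exact congrArg h hp
  | cons f π ih =>
    simp only [pathδ] at hp ⊢
    cases hδ : A.δ q f with
    | none => simp [hδ] at hp
    | some q' =>
      rw [hδ] at hp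
      rw [hm.2.2.2 q f q' hδ]
      exact ih hp

/-- If `A ⊑ B` via `h`, with `Π(A) = Π(B)`, all type inequalities being
equalities, and every reentrancy of `B` being a reentrancy of `A`, then `B ⊑ A`
(so `A` and `B` are alphabetic variants). -/
theorem alphabetic_variants_of_no_strict_difference [PartialOrder Types] (θ : Nodes → Types)
    (A B : TFS Nodes Feats) (h : Nodes → Nodes) (hm : IsMorphism θ A B h)
    (hpi : A.Pi = B.Pi)
    (hty : ∀ q ∈ A.Q, θ q = θ (h q))
    (hre : ∀ π₁ π₂ q, pathδ B.δ B.root π₁ = some q → pathδ B.δ B.root π₂ = some q →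
      ∃ q', pathδ A.δ A.root π₁ = some q' ∧ pathδ A.δ A.root π₂ = some q') :
    Subsumes θ B A ∧ Subsumes θ A B := by
  classical
  refine ⟨?_, ⟨h, hm⟩⟩
  choose π hπ using B.reach
  have key : ∀ q (hq : q ∈ B.Q), ∃ p, pathδ A.δ A.root (π q hq) = some p := by
    intro q hq
    have hmem : (π q hq) ∈ A.Pi := by
      rw [hpi]
      simp [TFS.Pi, hπ q hq]
    obtain ⟨p, hp⟩ := Option.isSome_iff_exists.mp hmem
    exact ⟨p, hp⟩
  choose gp hgp using key
  have hgq : ∀ q (hq : q ∈ B.Q), h (gp q hq) = q := by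
    intro q hq
    have := morphism_path hm (hgp q hq)
    rw [hm.1, hπ q hq] at this
    exact (Option.some_inj.mp this).symm
  have huniq : ∀ q (hq : q ∈ B.Q) π', pathδ B.δ B.root π' = some q →
      pathδ A.δ A.root π' = some (gp q hq) := by
    intro q hq π' hπ'
    obtain ⟨q', h1, h2⟩ := hre (π q hq) π' q (hπ q hq) hπ'
    rw [hgp q hq] at h1
    rw [h2, Option.some_inj.mp h1]
  have hgmem : ∀ q (hq : q ∈ B.Q), gp q hq ∈ A.Q := fun q hq =>
    path_mem A A.root_mem (hgp q hq)
  refine ⟨fun q => if hq : q ∈ B.Q then gp q hq else A.root, ?_, ?_, ?_, ?_⟩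
  · simp only [dif_pos B.root_mem]
    have := huniq B.root B.root_mem [] (by simp [pathδ])
    simp [pathδ] at this
    exact this.symm
  · intro q hq
    simp only [dif_pos hq]
    exact hgmem q hq
  · intro q hq
    simp only [dif_pos hq]
    have h1 := hty (gp q hq) (hgmem q hq)
    rw [hgq q hq] at h1
    exact le_of_eq h1.symm
  · intro q f q' hδ
    have hq : q ∈ B.Q := B.dom q f (by simp [hδ])
    have hq' : q' ∈ B.Q := B.closed q f q' hδ
    simp only [dif_pos hq, dif_pos hq']
    have hBpath : pathδ B.δ B.root (π q hq ++ [f]) = some q' := by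
      rw [pathδ_append, hπ q hq]
      simp [pathδ, hδ]
    have hApath := huniq q' hq' (π q hq ++ [f]) hBpath
    rw [pathδ_append, hgp q hq] at hApath
    simpa [pathδ] using hApath
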